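/- Let 𝓗 be a connected hypergraph on H with 𝓗, X ⇝ H₁,…,Hₙ, let I ⊆ {1,…,n}, and for each i ∈ I let Tᵢ be a construct of 𝓗_{Hᵢ}. Then the tree X({Tᵢ : i ∈ I}), with root decorated by X and the constructs Tᵢ (i ∈ I) grafted onto it, is a construct of the reconnected restriction 𝓗↾(H ∖ ⋃_{j ∉ I} H_j). -/

import Mathlib

open scoped Classical

noncomputable section

/-! ## Hypergraphs (nestohedra combinatorics), after Curien–Laplante-Anfossi:
hypergraphs, restrictions, connectivity, saturation, reconnected restriction,
constructs/constructions, the face order, the flip rewriting, and terms over the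
associated signatures. -/

/-- A hypergraph on a finite vertex set: a finite set of nonempty hyperedges whose union is
the vertex set, assumed atomic (every singleton is a hyperedge). -/
structure CLHypergraph (α : Type*) [DecidableEq α] where
  verts : Finset α
  edges : Finset (Finset α)
  edges_nonempty : ∀ e ∈ edges, e.Nonempty
  edges_subset : ∀ e ∈ edges, e ⊆ verts
  atomic : ∀ v ∈ verts, {v} ∈ edges

namespace CLHypergraph

variable {α : Type*} [DecidableEq α]

/-- The plain restriction `𝓗_X` of a hypergraph to a subset `X` of its vertices. -/
def restrict (H : CLHypergraph α) (X : Finset α) : CLHypergraph α where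
  verts := X ∩ H.verts
  edges := H.edges.filter (· ⊆ X)
  edges_nonempty e he := H.edges_nonempty e (Finset.mem_filter.mp he).1
  edges_subset e he :=
    Finset.subset_inter (Finset.mem_filter.mp he).2 (H.edges_subset e (Finset.mem_filter.mp he).1)
  atomic v hv := by
    rcases Finset.mem_inter.mp hv with ⟨h1, h2⟩
    exact Finset.mem_filter.mpr ⟨H.atomic v h2, Finset.singleton_subset_iff.mpr h1⟩

/-- A hypergraph is connected if its vertex set is nonempty and admits no nontrivial
partition `X₁ ∪ X₂` such that every edge lies in `X₁` or in `X₂`. -/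
def Connected (H : CLHypergraph α) : Prop :=
  H.verts.Nonempty ∧ ∀ X₁ X₂ : Finset α, X₁.Nonempty → X₂.Nonempty →
    Disjoint X₁ X₂ → X₁ ∪ X₂ = H.verts → ∃ e ∈ H.edges, ¬e ⊆ X₁ ∧ ¬e ⊆ X₂

/-- `C` is (the vertex set of) a connected component of `H`: a maximal connected subset. -/
def IsComponent (H : CLHypergraph α) (C : Finset α) : Prop :=
  C ⊆ H.verts ∧ (H.restrict C).Connected ∧
    ∀ D : Finset α, C ⊆ D → D ⊆ H.verts → (H.restrict D).Connected → D = C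

/-- `y` and `z` lie in the same connected component of `H`. -/
def SameComponent (H : CLHypergraph α) (y z : α) : Prop :=
  ∃ C : Finset α, H.IsComponent C ∧ y ∈ C ∧ z ∈ C

/-- The saturation `Sat(𝓗)`: the set of (nonempty) connected subsets of vertices. -/
def sat (H : CLHypergraph α) : Finset (Finset α) :=
  H.verts.powerset.filter fun X => (H.restrict X).Connected

theorem singleton_connected (H : CLHypergraph α) {v : α} (hv : v ∈ H.verts) :
    (H.restrict {v}).Connected := by
  constructor
  · exact ⟨v, Finset.mem_inter.mpr ⟨Finset.mem_singleton_self v, hv⟩⟩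
  · intro X₁ X₂ h₁ h₂ hd hu
    exfalso
    have hv' : ({v} : Finset α) ∩ H.verts = {v} :=
      Finset.inter_eq_left.mpr (Finset.singleton_subset_iff.mpr hv)
    have hu' : X₁ ∪ X₂ = ({v} : Finset α) := hu.trans hv'
    have hX₁ : X₁ ⊆ {v} := hu' ▸ Finset.subset_union_left
    have hX₂ : X₂ ⊆ {v} := hu' ▸ Finset.subset_union_right
    obtain ⟨a, ha⟩ := h₁
    obtain ⟨b, hb⟩ := h₂
    have ha' := Finset.mem_singleton.mp (hX₁ ha)
    have hb' := Finset.mem_singleton.mp (hX₂ hb)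
    subst ha'; exact Finset.disjoint_left.mp hd ha (hb' ▸ hb)

/-- The reconnected restriction `𝓗 ↾ X` of `𝓗` to `X`. -/
def reconRestrict (H : CLHypergraph α) (X : Finset α) : CLHypergraph α where
  verts := X ∩ H.verts
  edges := (H.sat.image (· ∩ X)).filter (·.Nonempty)
  edges_nonempty e he := (Finset.mem_filter.mp he).2
  edges_subset := by
    intro e he
    rcases Finset.mem_image.mp (Finset.mem_filter.mp he).1 with ⟨Z, hZ, rfl⟩
    have hZv : Z ⊆ H.verts := Finset.mem_powerset.mp (Finset.mem_filter.mp hZ).1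
    exact fun a ha => Finset.mem_inter.mpr
      ⟨(Finset.mem_inter.mp ha).2, hZv (Finset.mem_inter.mp ha).1⟩
  atomic := by
    intro v hv
    rcases Finset.mem_inter.mp hv with ⟨h1, h2⟩
    refine Finset.mem_filter.mpr ⟨Finset.mem_image.mpr ⟨{v}, ?_, ?_⟩, ?_⟩
    · exact Finset.mem_filter.mpr
        ⟨Finset.mem_powerset.mpr (Finset.singleton_subset_iff.mpr h2),
         H.singleton_connected h2⟩
    · exact Finset.inter_eq_left.mpr (Finset.singleton_subset_iff.mpr h1)
    · exact ⟨v, by simp [Finset.inter_eq_left.mpr (Finset.singleton_subset_iff.mpr h1)]⟩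

/-- `x ⇝ {y,z}` in `𝓗`: after removing `x`, the vertices `y` and `z` lie in the same
connected component.  Its negation is "`x` disconnects `y` and `z` in `𝓗`". -/
def Links (H : CLHypergraph α) (x y z : α) : Prop :=
  (H.restrict (H.verts \ {x})).SameComponent y z

/-- A hypergraph is contextual if for every connected subset `Y` of cardinality at least 3
and all distinct `x, y, z ∈ Y`, `x` disconnects `y` and `z` in `𝓗_Y` iff it does in `𝓗`. -/
def Contextual (H : CLHypergraph α) : Prop :=
  ∀ Y : Finset α, Y ⊆ H.verts → (H.restrict Y).Connected → 3 ≤ Y.card →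
    ∀ x y z : α, x ∈ Y → y ∈ Y → z ∈ Y → x ≠ y → y ≠ z → x ≠ z →
      ((H.restrict Y).Links x y z ↔ H.Links x y z)

end CLHypergraph

/-- Finite rooted trees with nodes decorated by finite sets (potential constructs). -/
inductive FTree (α : Type*) : Type _ where
  | node : Finset α → List (FTree α) → FTree α

namespace FTree

variable {α : Type*} [DecidableEq α]

/-- The decoration of the root node. -/
def label : FTree α → Finset α
  | node Y _ => Y

/-- The list of children of the root node. -/
def children : FTree α → List (FTree α)
  | node _ ts => ts

/-- The support of a tree: the union of the decorations of its nodes. -/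
def support : FTree α → Finset α
  | node Y [] => Y
  | node Y (t :: ts) => support t ∪ support (node Y ts)

/-- The list of decorations of the nodes of a tree. -/
def labels : FTree α → List (Finset α)
  | node Y [] => [Y]
  | node Y (t :: ts) => labels t ++ labels (node Y ts)

/-- The dimension of a construct: the sum over its nodes `X` of `|X| - 1`. -/
def dim (T : FTree α) : ℕ := (T.labels.map fun X => X.card - 1).sum

mutual
  /-- The (full) subtree rooted at the node decorated by `X`, if any. -/
  def subtreeAt : FTree α → Finset α → Option (FTree α)
    | node Y ts, X => if Y = X then some (node Y ts) else subtreeAtList ts X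
  def subtreeAtList : List (FTree α) → Finset α → Option (FTree α)
    | [], _ => none
    | t :: ts, X => (subtreeAt t X).elim (subtreeAtList ts X) some
end

/-- The support `supp (T ↾ X)` of the subtree rooted at the node decorated by `X`
(or `∅` if there is no such node). -/
def suppAt (T : FTree α) (X : Finset α) : Finset α :=
  ((T.subtreeAt X).map support).getD ∅

mutual
  /-- The list of supports of the subtrees rooted at the nodes of `T` (its nested set). -/
  def nests : FTree α → List (Finset α)
    | node Y ts => support (node Y ts) :: nestsList ts
  def nestsList : List (FTree α) → List (Finset α)
    | [] => []
    | t :: ts => nests t ++ nestsList ts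
end

/-- The nested set of a tree, as a finite set. -/
def nestSet (T : FTree α) : Finset (Finset α) := T.nests.toFinset

/-- `S ≺ T` (`S` is covered by `T`) in the face order: `T` is obtained from `S` by
contracting one edge between a node and its father (equivalently, the nested set of `T`
is obtained from that of `S` by removing one non-root element). -/
def CoveredBy (S T : FTree α) : Prop :=
  ∃ N ∈ S.nests, N ≠ S.support ∧ T.nestSet = S.nestSet.erase N

/-- The face (subface) order `S ≼ T` on constructs: the reflexive–transitive closure of
the covering relation `≺`. -/
def FaceLe (S T : FTree α) : Prop := Relation.ReflTransGen CoveredBy S T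

/-- `IsSubtree S T`: `S` is a (full) subtree of `T`. -/
inductive IsSubtree : FTree α → FTree α → Prop
  | refl (t : FTree α) : IsSubtree t t
  | child {s t u : FTree α} : IsSubtree s t → t ∈ u.children → IsSubtree s u

/-- In `T`, the node decorated by `X` has a child decorated by `Y`. -/
def ParentChild (X Y : Finset α) (T : FTree α) : Prop :=
  ∃ R : FTree α, IsSubtree R T ∧ R.label = X ∧ ∃ t ∈ R.children, t.label = Y

mutual
  /-- Pruning: remove all (subtrees rooted at) nodes whose decoration is not a subset
  of `X`, keeping the root. -/
  def prune (X : Finset α) : FTree α → FTree α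
    | node Y ts => node Y (pruneList X ts)
  def pruneList (X : Finset α) : List (FTree α) → List (FTree α)
    | [] => []
    | t :: ts => if t.label ⊆ X then prune X t :: pruneList X ts else pruneList X ts
end

end FTree

/-- `IsConstruct H T`: the tree `T` is a construct of the hypergraph `H`: its root `Y` is a
nonempty subset of the vertices, its children are constructs of the connected components of
`𝓗 ∖ Y` (one for each component, listed by increasing maximal vertex). -/
inductive IsConstruct {α : Type*} [LinearOrder α] : CLHypergraph α → FTree α → Prop
  | node {H : CLHypergraph α} (Y : Finset α) (ts : List (FTree α))
      (hY : Y.Nonempty) (hYsub : Y ⊆ H.verts)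
      (hmem : ∀ t ∈ ts, (H.restrict (H.verts \ Y)).IsComponent t.support)
      (hcover : ∀ C : Finset α, (H.restrict (H.verts \ Y)).IsComponent C →
        ∃ t ∈ ts, t.support = C)
      (hsorted : ts.Pairwise fun a b => a.support.max < b.support.max)
      (hchild : ∀ t ∈ ts, IsConstruct (H.restrict t.support) t) :
      IsConstruct H (FTree.node Y ts)

section ConstructionOrder

variable {α : Type*} [LinearOrder α]

/-- A construction: a construct all of whose nodes are singletons (a vertex of the
nestohedron). -/
def IsConstruction (H : CLHypergraph α) (T : FTree α) : Prop :=
  IsConstruct H T ∧ ∀ X ∈ T.labels, X.card = 1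

/-- An `X`-face: a 2-dimensional construct whose unique non-singleton node is decorated
by `X`, of cardinality 3. -/
def IsXFace (H : CLHypergraph α) (X : Finset α) (T : FTree α) : Prop :=
  IsConstruct H T ∧ X.card = 3 ∧ X ∈ T.labels ∧ ∀ Y ∈ T.labels, Y ≠ X → Y.card = 1

/-- Two distinct constructions are joined by an edge of the nestohedron: both are covered
by a common 1-dimensional construct. -/
def EdgeJoined (H : CLHypergraph α) (S T : FTree α) : Prop :=
  IsConstruction H S ∧ IsConstruction H T ∧ S ≠ T ∧
  ∃ V : FTree α, IsConstruct H V ∧ V.dim = 1 ∧ FTree.CoveredBy S V ∧ FTree.CoveredBy T V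

/-- The flip rewriting relation `S → T` on constructions of an ordered hypergraph:
`S` and `T` are the two endpoints of an edge whose 1-dimensional face has unique
non-singleton node `{x, y}` with `x < y`, and in `S` the node `{x}` is the parent of the
node `{y}`. -/
def Flip (H : CLHypergraph α) (S T : FTree α) : Prop :=
  IsConstruction H S ∧ IsConstruction H T ∧ S ≠ T ∧
  ∃ (V : FTree α) (x y : α), IsConstruct H V ∧ V.dim = 1 ∧ x ≠ y ∧
    ({x, y} : Finset α) ∈ V.labels ∧ FTree.CoveredBy S V ∧ FTree.CoveredBy T V ∧
    FTree.ParentChild ({x} : Finset α) ({y} : Finset α) S ∧ x < y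

/-- The coordinate vector of a construction `S` of `H`:
`v^S_x = |{e ∈ Sat(𝓗) : x ∈ e ⊆ supp (S ↾ x)}|`. -/
def coordVec (H : CLHypergraph α) (S : FTree α) (x : α) : ℕ :=
  (H.sat.filter fun e => x ∈ e ∧ e ⊆ S.suppAt {x}).card

end ConstructionOrder

/-- Raw terms over the signature `Σ_𝓗` (and `Σ^c_𝓗`): variables are (connected) subsets,
function symbols are pairs `(X, Y)` of subsets, applied to a list of arguments. -/
inductive HTerm (α : Type*) : Type _ where
  | var : Finset α → HTerm α
  | app : Finset α → Finset α → List (HTerm α) → HTerm α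

namespace HTerm

variable {α : Type*} [DecidableEq α]

/-- The (output) sort of a term. -/
def sortOf : HTerm α → Finset α
  | var A => A
  | app _ Y _ => Y

/-- The list of variables occurring in a term. -/
def varsList : HTerm α → List (Finset α)
  | var A => [A]
  | app _ _ [] => []
  | app X Y (t :: ts) => varsList t ++ varsList (app X Y ts)

/-- The list of first components of the function symbols occurring in a term. -/
def appFirsts : HTerm α → List (Finset α)
  | var _ => []
  | app X _ [] => [X]
  | app X Y (t :: ts) => appFirsts t ++ appFirsts (app X Y ts)

/-- A term is closed if it contains no variables. -/
def Closed (t : HTerm α) : Prop := t.varsList = []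

/-- The union `⋃ var(t)` of the variables of a term. -/
def varsUnion (t : HTerm α) : Finset α := t.varsList.foldr (· ∪ ·) ∅

mutual
  /-- Projection of a term to a decorated tree: every function symbol `(X, Y)` is sent to
  its first component `X`, and all variables are pruned. -/
  def toTree : HTerm α → FTree α
    | .var A => .node A []
    | .app X _ ts => .node X (toTreeList ts)
  def toTreeList : List (HTerm α) → List (FTree α)
    | [] => []
    | .var _ :: ts => toTreeList ts
    | t :: ts => toTree t :: toTreeList ts
end

end HTerm

/-- Well-formed terms over the signature `Σ_𝓗` associated with the hypergraph `H`:
a variable is a connected subset (its own sort); a function symbol `(X, Y)` (with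
`∅ ≠ X ⊆ Y ⊆ H` and `Y` connected) is applied to arguments whose sorts are exactly the
connected components of `𝓗_Y ∖ X`, listed by increasing maximal vertex. -/
inductive IsTerm {α : Type*} [LinearOrder α] (H : CLHypergraph α) : HTerm α → Prop
  | var (A : Finset α) : A ⊆ H.verts → (H.restrict A).Connected → IsTerm H (.var A)
  | app (X Y : Finset α) (ts : List (HTerm α)) :
      X.Nonempty → X ⊆ Y → Y ⊆ H.verts → (H.restrict Y).Connected →
      (∀ t ∈ ts, (H.restrict (Y \ X)).IsComponent t.sortOf) →
      (∀ C : Finset α, (H.restrict (Y \ X)).IsComponent C → ∃ t ∈ ts, t.sortOf = C) →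
      ts.Pairwise (fun a b => a.sortOf.max < b.sortOf.max) →
      (∀ t ∈ ts, IsTerm H t) →
      IsTerm H (.app X Y ts)

/-!
Let `D` be the union of the discarded components `H_j` (`j ∉ I`) and `W = H ∖ D`. If a connected
set `Z` of `𝓗` has its trace `Z ∩ W` inside a union `B` of kept components, then `Z` avoids `X`
(a vertex of `Z ∩ X` would survive in `Z ∩ W ⊆ B`), so `Z` lies in one component of `𝓗_{H∖X}`,
which meets and hence is contained in `B`. Thus on such `B` the edges of `(𝓗 ↾ W)_B` are connected
sets of `𝓗_B`, and adding them changes neither connectivity nor components nor constructs.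
Taking `B = W ∖ X` gives the root condition of `X({Tᵢ})`, and `B = Hᵢ` transports each `Tᵢ`.
-/

namespace CLHypergraph

variable {α : Type*} [DecidableEq α]

theorem ext {G G' : CLHypergraph α} (hv : G.verts = G'.verts) (he : G.edges = G'.edges) :
    G = G' := by
  cases G; cases G'; cases hv; cases he; rfl

@[simp]
theorem restrict_verts (G : CLHypergraph α) (A : Finset α) :
    (G.restrict A).verts = A ∩ G.verts := rfl

@[simp]
theorem mem_restrict_edges {G : CLHypergraph α} {A e : Finset α} :
    e ∈ (G.restrict A).edges ↔ e ∈ G.edges ∧ e ⊆ A := Finset.mem_filter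

theorem restrict_restrict (G : CLHypergraph α) (A B : Finset α) :
    (G.restrict A).restrict B = G.restrict (B ∩ A) := by
  refine ext ?_ ?_
  · simp only [restrict_verts, Finset.inter_assoc]
  · ext e
    simp only [mem_restrict_edges, Finset.subset_inter_iff]
    tauto

theorem restrict_restrict_of_subset (G : CLHypergraph α) {A B : Finset α} (h : B ⊆ A) :
    (G.restrict A).restrict B = G.restrict B := by
  rw [restrict_restrict, Finset.inter_eq_left.mpr h]

theorem mem_sat_iff {G : CLHypergraph α} {Z : Finset α} :
    Z ∈ G.sat ↔ Z ⊆ G.verts ∧ (G.restrict Z).Connected := by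
  simp [sat]

theorem mem_sat_restrict_iff {G : CLHypergraph α} {A Z : Finset α} :
    Z ∈ (G.restrict A).sat ↔ Z ⊆ A ∧ Z ∈ G.sat := by
  simp only [mem_sat_iff, restrict_verts, Finset.subset_inter_iff, restrict_restrict]
  constructor
  · rintro ⟨⟨hZA, hZV⟩, hc⟩
    exact ⟨hZA, hZV, by rwa [Finset.inter_eq_left.mpr hZA] at hc⟩
  · rintro ⟨hZA, hZV, hc⟩
    exact ⟨⟨hZA, hZV⟩, by rwa [Finset.inter_eq_left.mpr hZA]⟩

theorem singleton_mem_sat (G : CLHypergraph α) {v : α} (hv : v ∈ G.verts) : {v} ∈ G.sat :=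
  mem_sat_iff.mpr ⟨Finset.singleton_subset_iff.mpr hv, G.singleton_connected hv⟩

theorem edge_mem_sat (G : CLHypergraph α) {e : Finset α} (he : e ∈ G.edges) : e ∈ G.sat := by
  have heV : e ∩ G.verts = e := Finset.inter_eq_left.mpr (G.edges_subset e he)
  refine mem_sat_iff.mpr ⟨G.edges_subset e he, ?_, ?_⟩
  · simpa [heV] using G.edges_nonempty e he
  · intro X₁ X₂ ⟨a, ha⟩ ⟨b, hb⟩ hd hu
    rw [restrict_verts, heV] at hu
    refine ⟨e, mem_restrict_edges.mpr ⟨he, subset_rfl⟩, fun h => ?_, fun h => ?_⟩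
    · exact Finset.disjoint_left.mp hd (h (hu ▸ Finset.mem_union_right X₁ hb)) hb
    · exact Finset.disjoint_left.mp hd ha (h (hu ▸ Finset.mem_union_left X₂ ha))

theorem Connected.subset_or_subset {G : CLHypergraph α} (hG : G.Connected) {X₁ X₂ : Finset α}
    (hd : Disjoint X₁ X₂) (hcov : G.verts ⊆ X₁ ∪ X₂)
    (hedges : ∀ e ∈ G.edges, e ⊆ X₁ ∨ e ⊆ X₂) : G.verts ⊆ X₁ ∨ G.verts ⊆ X₂ := by
  by_contra! h
  obtain ⟨⟨a, haV, ha⟩, ⟨b, hbV, hb⟩⟩ := And.intro (Finset.not_subset.mp h.2)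
    (Finset.not_subset.mp h.1)
  have hu : G.verts ∩ X₁ ∪ G.verts ∩ X₂ = G.verts := by
    rw [← Finset.inter_union_distrib_left, Finset.inter_eq_left.mpr hcov]
  obtain ⟨e, he, he₁, he₂⟩ := hG.2 _ _
    ⟨a, Finset.mem_inter.mpr ⟨haV, (Finset.mem_union.mp (hcov haV)).resolve_right ha⟩⟩
    ⟨b, Finset.mem_inter.mpr ⟨hbV, (Finset.mem_union.mp (hcov hbV)).resolve_left hb⟩⟩
    (hd.mono Finset.inter_subset_right Finset.inter_subset_right) hu
  rcases hedges e he with h | h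
  · exact he₁ (Finset.subset_inter (G.edges_subset e he) h)
  · exact he₂ (Finset.subset_inter (G.edges_subset e he) h)

theorem connected_restrict_union {G : CLHypergraph α} {A B : Finset α}
    (hA : (G.restrict A).Connected) (hB : (G.restrict B).Connected) {v : α} (hvA : v ∈ A)
    (hvB : v ∈ B) (hv : v ∈ G.verts) : (G.restrict (A ∪ B)).Connected := by
  refine ⟨⟨v, by simp [hvA, hv]⟩, fun X₁ X₂ ⟨a, ha⟩ ⟨b, hb⟩ hd hu => ?_⟩
  by_contra! hno
  have hedges : ∀ C ⊆ A ∪ B, ∀ e ∈ (G.restrict C).edges, e ⊆ X₁ ∨ e ⊆ X₂ := fun C hC e he =>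
    have he' := mem_restrict_edges.mp he
    or_iff_not_imp_left.mpr (hno e (mem_restrict_edges.mpr ⟨he'.1, he'.2.trans hC⟩))
  have hcov : ∀ C ⊆ A ∪ B, (G.restrict C).verts ⊆ X₁ ∪ X₂ := fun C hC =>
    hu ▸ Finset.inter_subset_inter_right hC
  rw [restrict_verts] at hu
  -- `v` forces `A` and `B` into the same part, which then contains all of `A ∪ B`
  rcases hA.subset_or_subset hd (hcov A Finset.subset_union_left)
    (hedges A Finset.subset_union_left) with hA' | hA' <;>
  rcases hB.subset_or_subset hd (hcov B Finset.subset_union_right)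
    (hedges B Finset.subset_union_right) with hB' | hB' <;>
  simp only [restrict_verts, Finset.subset_iff, Finset.disjoint_left, Finset.ext_iff,
    Finset.mem_union, Finset.mem_inter] at * <;>
  grind

theorem IsComponent.nonempty {G : CLHypergraph α} {C : Finset α} (hC : G.IsComponent C) :
    C.Nonempty :=
  hC.2.1.1.mono Finset.inter_subset_left

theorem IsComponent.eq_of_mem {G : CLHypergraph α} {C C' : Finset α} (hC : G.IsComponent C)
    (hC' : G.IsComponent C') {v : α} (hv : v ∈ C) (hv' : v ∈ C') : C = C' := by
  have hu := G.connected_restrict_union hC.2.1 hC'.2.1 hv hv' (hC.1 hv)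
  have hsub := Finset.union_subset hC.1 hC'.1
  rw [← hC.2.2 _ Finset.subset_union_left hsub hu, hC'.2.2 _ Finset.subset_union_right hsub hu]

theorem exists_isComponent_superset (G : CLHypergraph α) {Y : Finset α} (hY : Y ∈ G.sat) :
    ∃ C, G.IsComponent C ∧ Y ⊆ C := by
  obtain ⟨C, hCS, hmax⟩ := (G.sat.filter (Y ⊆ ·)).exists_max_image Finset.card
    ⟨Y, Finset.mem_filter.mpr ⟨hY, subset_rfl⟩⟩
  obtain ⟨hC, hYC⟩ := Finset.mem_filter.mp hCS
  refine ⟨C, ⟨(mem_sat_iff.mp hC).1, (mem_sat_iff.mp hC).2, fun D hCD hDV hD => ?_⟩, hYC⟩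
  have hDS : D ∈ G.sat.filter (Y ⊆ ·) :=
    Finset.mem_filter.mpr ⟨mem_sat_iff.mpr ⟨hDV, hD⟩, hYC.trans hCD⟩
  exact (Finset.eq_of_subset_of_card_le hCD (hmax D hDS)).symm

theorem exists_isComponent_mem (G : CLHypergraph α) {v : α} (hv : v ∈ G.verts) :
    ∃ C, G.IsComponent C ∧ v ∈ C := by
  obtain ⟨C, hC, hvC⟩ := G.exists_isComponent_superset (G.singleton_mem_sat hv)
  exact ⟨C, hC, Finset.singleton_subset_iff.mp hvC⟩

theorem IsComponent.subset {G : CLHypergraph α} {A C : Finset α}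
    (hC : (G.restrict A).IsComponent C) : C ⊆ A :=
  hC.1.trans Finset.inter_subset_left

theorem IsComponent.restrict_of_subset {G : CLHypergraph α} {A B C : Finset α}
    (hC : (G.restrict A).IsComponent C) (hCB : C ⊆ B) (hBA : B ⊆ A) :
    (G.restrict B).IsComponent C := by
  obtain ⟨hCV, hCc, hmax⟩ := hC
  refine ⟨Finset.subset_inter hCB (hCV.trans Finset.inter_subset_right), ?_,
    fun D hCD hDV hD => hmax D hCD ?_ ?_⟩
  · rwa [restrict_restrict_of_subset _ hCB, ← restrict_restrict_of_subset _ (hCB.trans hBA)]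
  · exact hDV.trans (Finset.inter_subset_inter_right hBA)
  · have hDB : D ⊆ B := hDV.trans Finset.inter_subset_left
    rwa [restrict_restrict_of_subset _ (hDB.trans hBA), ← restrict_restrict_of_subset _ hDB]

structure SatExtension (G G' : CLHypergraph α) : Prop where
  verts_eq : G'.verts = G.verts
  edges_subset : G.edges ⊆ G'.edges
  edges_subset_sat : G'.edges ⊆ G.sat

namespace SatExtension

variable {G G' : CLHypergraph α}

theorem restrict (h : SatExtension G G') (B : Finset α) :
    SatExtension (G.restrict B) (G'.restrict B) where
  verts_eq := by rw [restrict_verts, restrict_verts, h.verts_eq]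
  edges_subset e he :=
    have he' := mem_restrict_edges.mp he
    mem_restrict_edges.mpr ⟨h.edges_subset he'.1, he'.2⟩
  edges_subset_sat e he :=
    have he' := mem_restrict_edges.mp he
    mem_sat_restrict_iff.mpr ⟨he'.2, h.edges_subset_sat he'.1⟩

theorem connected_iff (h : SatExtension G G') : G.Connected ↔ G'.Connected := by
  refine ⟨fun ⟨hne, hG⟩ => ⟨h.verts_eq ▸ hne, fun X₁ X₂ h₁ h₂ hd hu => ?_⟩,
    fun ⟨hne, hG'⟩ => ⟨h.verts_eq ▸ hne, fun X₁ X₂ h₁ h₂ hd hu => ?_⟩⟩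
  · obtain ⟨e, he, hcross⟩ := hG X₁ X₂ h₁ h₂ hd (hu.trans h.verts_eq)
    exact ⟨e, h.edges_subset he, hcross⟩
  · obtain ⟨e, he, he₁, he₂⟩ := hG' X₁ X₂ h₁ h₂ hd (hu.trans h.verts_eq.symm)
    -- a crossing edge of `G'` is connected in `G`, so it contains a crossing edge of `G`
    obtain ⟨heV, hec⟩ := mem_sat_iff.mp (h.edges_subset_sat he)
    by_contra! hno
    have hev : (G.restrict e).verts = e := Finset.inter_eq_left.mpr heV
    rcases hec.subset_or_subset hd (hev ▸ hu ▸ Finset.inter_subset_right) fun f hf =>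
      or_iff_not_imp_left.mpr (hno f (mem_restrict_edges.mp hf).1) with h' | h'
    · exact he₁ (hev ▸ h')
    · exact he₂ (hev ▸ h')

theorem isComponent_iff (h : SatExtension G G') {C : Finset α} :
    G.IsComponent C ↔ G'.IsComponent C := by
  simp only [IsComponent, h.verts_eq, fun B => (h.restrict B).connected_iff]

end SatExtension

@[simp]
theorem reconRestrict_verts (H : CLHypergraph α) (W : Finset α) :
    (H.reconRestrict W).verts = W ∩ H.verts := rfl

theorem mem_reconRestrict_edges {H : CLHypergraph α} {W e : Finset α} :
    e ∈ (H.reconRestrict W).edges ↔ e.Nonempty ∧ ∃ Z ∈ H.sat, Z ∩ W = e := by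
  simp only [reconRestrict, Finset.mem_filter, Finset.mem_image]
  tauto

theorem satExtension_restrict_reconRestrict (H : CLHypergraph α) {W B : Finset α}
    (hBW : B ⊆ W) (hsat : ∀ Z ∈ H.sat, (Z ∩ W).Nonempty → Z ∩ W ⊆ B → Z ⊆ B) :
    (H.restrict B).SatExtension ((H.reconRestrict W).restrict B) where
  verts_eq := by
    simp only [restrict_verts, reconRestrict_verts, ← Finset.inter_assoc,
      Finset.inter_eq_left.mpr hBW]
  edges_subset e he := by
    obtain ⟨he, heB⟩ := mem_restrict_edges.mp he
    refine mem_restrict_edges.mpr ⟨mem_reconRestrict_edges.mpr ?_, heB⟩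
    exact ⟨H.edges_nonempty e he, e, H.edge_mem_sat he, Finset.inter_eq_left.mpr (heB.trans hBW)⟩
  edges_subset_sat e he := by
    obtain ⟨he, heB⟩ := mem_restrict_edges.mp he
    obtain ⟨hne, Z, hZ, rfl⟩ := mem_reconRestrict_edges.mp he
    have hZB := hsat Z hZ hne heB
    rw [Finset.inter_eq_left.mpr (hZB.trans hBW)]
    exact mem_sat_restrict_iff.mpr ⟨hZB, hZ⟩

theorem satExtension_restrict_reconRestrict_sdiff (H : CLHypergraph α) {X D B : Finset α}
    (hXD : Disjoint X D) (hBV : B ⊆ H.verts) (hBX : Disjoint B X) (hBD : Disjoint B D)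
    (hB : ∀ C, (H.restrict (H.verts \ X)).IsComponent C → (C ∩ B).Nonempty → C ⊆ B) :
    (H.restrict B).SatExtension ((H.reconRestrict (H.verts \ D)).restrict B) := by
  refine H.satExtension_restrict_reconRestrict (Finset.subset_sdiff.mpr ⟨hBV, hBD⟩)
    fun Z hZ ⟨a, ha⟩ hZB => ?_
  have hZV := (mem_sat_iff.mp hZ).1
  -- a vertex of `Z` in `X` survives the restriction to `H.verts \ D`, so it would lie in `B`
  have hZX : Z ⊆ H.verts \ X := fun b hb => Finset.mem_sdiff.mpr ⟨hZV hb, fun hbX =>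
    Finset.disjoint_left.mp hBX (hZB (Finset.mem_inter.mpr ⟨hb, Finset.mem_sdiff.mpr
      ⟨hZV hb, Finset.disjoint_left.mp hXD hbX⟩⟩)) hbX⟩
  obtain ⟨C, hC, hZC⟩ := (H.restrict (H.verts \ X)).exists_isComponent_superset
    (mem_sat_restrict_iff.mpr ⟨hZX, hZ⟩)
  exact hZC.trans (hB C hC ⟨a, Finset.mem_inter.mpr ⟨hZC (Finset.mem_inter.mp ha).1, hZB ha⟩⟩)

def unionComponents (G : CLHypergraph α) (A : Finset α) (P : Finset α → Prop)
    [DecidablePred P] : Finset α :=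
  (G.verts.powerset.filter fun C => (G.restrict A).IsComponent C ∧ P C).sup id

section unionComponents

variable {G : CLHypergraph α} {A C : Finset α} {P : Finset α → Prop} [DecidablePred P]

theorem unionComponents_subset : G.unionComponents A P ⊆ A :=
  Finset.sup_le fun _ hC => (Finset.mem_filter.mp hC).2.1.subset

theorem IsComponent.subset_unionComponents (hC : (G.restrict A).IsComponent C) (hP : P C) :
    C ⊆ G.unionComponents A P :=
  Finset.le_sup (f := id) (Finset.mem_filter.mpr
    ⟨Finset.mem_powerset.mpr (hC.1.trans Finset.inter_subset_right), hC, hP⟩)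

theorem IsComponent.disjoint_unionComponents (hC : (G.restrict A).IsComponent C) (hP : ¬P C) :
    Disjoint C (G.unionComponents A P) := by
  refine Finset.disjoint_left.mpr fun v hvC hvD => ?_
  obtain ⟨C', hC', hvC'⟩ := Finset.mem_sup.mp hvD
  obtain ⟨hC'comp, hPC'⟩ := (Finset.mem_filter.mp hC').2
  exact hP (hC.eq_of_mem hC'comp hvC hvC' ▸ hPC')

theorem IsComponent.subset_sdiff_unionComponents (hC : (G.restrict A).IsComponent C)
    (hne : (C ∩ (A \ G.unionComponents A P)).Nonempty) : C ⊆ A \ G.unionComponents A P := by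
  by_cases hP : P C
  · obtain ⟨v, hv⟩ := hne
    exact absurd (hC.subset_unionComponents hP (Finset.mem_inter.mp hv).1)
      (Finset.mem_sdiff.mp (Finset.mem_inter.mp hv).2).2
  · exact Finset.subset_sdiff.mpr ⟨hC.subset, hC.disjoint_unionComponents hP⟩

theorem isComponent_restrict_sdiff_unionComponents_iff :
    (G.restrict (A \ G.unionComponents A P)).IsComponent C ↔
      (G.restrict A).IsComponent C ∧ ¬P C := by
  constructor
  · intro hC
    obtain ⟨v, hv⟩ := hC.nonempty
    obtain ⟨hvAD, hvV⟩ := Finset.mem_inter.mp (hC.1 hv)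
    obtain ⟨C₀, hC₀, hvC₀⟩ := (G.restrict A).exists_isComponent_mem
      (Finset.mem_inter.mpr ⟨(Finset.mem_sdiff.mp hvAD).1, hvV⟩)
    have hP₀ : ¬P C₀ := fun hP =>
      (Finset.mem_sdiff.mp hvAD).2 (hC₀.subset_unionComponents hP hvC₀)
    have hC₀' := hC₀.restrict_of_subset (hC₀.subset_sdiff_unionComponents
      ⟨v, Finset.mem_inter.mpr ⟨hvC₀, hvAD⟩⟩) Finset.sdiff_subset
    rw [hC.eq_of_mem hC₀' hv hvC₀]
    exact ⟨hC₀, hP₀⟩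
  · rintro ⟨hC, hP⟩
    exact hC.restrict_of_subset
      (Finset.subset_sdiff.mpr ⟨hC.subset, hC.disjoint_unionComponents hP⟩) Finset.sdiff_subset

end unionComponents

section reconRestrict_sdiff_unionComponents

variable {H : CLHypergraph α} {X C : Finset α} {P : Finset α → Prop} [DecidablePred P]

theorem disjoint_unionComponents_sdiff : Disjoint X (H.unionComponents (H.verts \ X) P) :=
  Finset.disjoint_of_subset_right unionComponents_subset Finset.disjoint_sdiff

theorem subset_verts_reconRestrict_sdiff_unionComponents (hXV : X ⊆ H.verts) :
    X ⊆ (H.reconRestrict (H.verts \ H.unionComponents (H.verts \ X) P)).verts :=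
  Finset.subset_inter (Finset.subset_sdiff.mpr ⟨hXV, disjoint_unionComponents_sdiff⟩) hXV

theorem isComponent_reconRestrict_sdiff_unionComponents_iff :
    ((H.reconRestrict (H.verts \ H.unionComponents (H.verts \ X) P)).restrict
      ((H.reconRestrict (H.verts \ H.unionComponents (H.verts \ X) P)).verts \ X)).IsComponent C ↔
      (H.restrict (H.verts \ X)).IsComponent C ∧ ¬P C := by
  have hverts : (H.reconRestrict (H.verts \ H.unionComponents (H.verts \ X) P)).verts \ X =
      (H.verts \ X) \ H.unionComponents (H.verts \ X) P := by
    ext v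
    simp only [reconRestrict_verts, Finset.mem_sdiff, Finset.mem_inter]
    tauto
  have hext := H.satExtension_restrict_reconRestrict_sdiff
    (disjoint_unionComponents_sdiff (X := X) (P := P))
    (Finset.sdiff_subset.trans Finset.sdiff_subset)
    (Finset.disjoint_of_subset_left Finset.sdiff_subset Finset.sdiff_disjoint)
    Finset.sdiff_disjoint fun _ hC => hC.subset_sdiff_unionComponents
  rw [hverts, ← hext.isComponent_iff, isComponent_restrict_sdiff_unionComponents_iff]

theorem IsComponent.satExtension_restrict_reconRestrict
    (hC : (H.restrict (H.verts \ X)).IsComponent C) (hP : ¬P C) :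
    (H.restrict C).SatExtension
      ((H.reconRestrict (H.verts \ H.unionComponents (H.verts \ X) P)).restrict C) :=
  H.satExtension_restrict_reconRestrict_sdiff disjoint_unionComponents_sdiff
    (hC.subset.trans Finset.sdiff_subset) (Finset.subset_sdiff.mp hC.subset).2
    (hC.disjoint_unionComponents hP) fun _ hC' ⟨_, hv⟩ =>
      (hC'.eq_of_mem hC (Finset.mem_inter.mp hv).1 (Finset.mem_inter.mp hv).2).le

end reconRestrict_sdiff_unionComponents

end CLHypergraph

theorem IsConstruct.of_satExtension {α : Type*} [LinearOrder α] {G G' : CLHypergraph α}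
    {T : FTree α} (hT : IsConstruct G T) (h : G.SatExtension G') : IsConstruct G' T := by
  induction hT generalizing G' with
  | @node G Y ts hY hYsub hmem hcover hsorted hchild ih =>
    have hY' : (G.restrict (G.verts \ Y)).SatExtension (G'.restrict (G'.verts \ Y)) := by
      rw [h.verts_eq]; exact h.restrict _
    exact IsConstruct.node Y ts hY (h.verts_eq ▸ hYsub)
      (fun t ht => hY'.isComponent_iff.mp (hmem t ht))
      (fun C hC => hcover C (hY'.isComponent_iff.mpr hC)) hsorted
      (fun t ht => ih t ht (h.restrict t.support))

/-- Lemma `partial-construct`.  If `𝓗, X ⇝ H₁, …, Hₙ` and constructs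
`Tᵢ` of `𝓗_{Hᵢ}` are given for `i ∈ I ⊆ {1, …, n}`, then `X({Tᵢ : i ∈ I})` is a construct
of `𝓗 ↾ (H ∖ ⋃_{j ∉ I} Hⱼ)`. -/
theorem stmt1 {α : Type*} [LinearOrder α] (H : CLHypergraph α) (hH : H.Connected)
    (X : Finset α) (hX : X.Nonempty) (hXsub : X ⊆ H.verts)
    (ts : List (FTree α))
    (hmem : ∀ t ∈ ts, (H.restrict (H.verts \ X)).IsComponent t.support)
    (hchild : ∀ t ∈ ts, IsConstruct (H.restrict t.support) t)
    (hsorted : ts.Pairwise fun a b => a.support.max < b.support.max) :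
    IsConstruct
      (H.reconRestrict (H.verts \
        ((H.verts.powerset.filter fun C =>
          (H.restrict (H.verts \ X)).IsComponent C ∧ C ∉ ts.map FTree.support).sup id)))
      (FTree.node X ts) := by
  change IsConstruct (H.reconRestrict (H.verts \
    H.unionComponents (H.verts \ X) (· ∉ ts.map FTree.support))) _
  have hcomp := fun C => CLHypergraph.isComponent_reconRestrict_sdiff_unionComponents_iff
    (H := H) (X := X) (P := (· ∉ ts.map FTree.support)) (C := C)
  have hkept : ∀ t ∈ ts, ¬t.support ∉ ts.map FTree.support :=
    fun t ht => not_not.mpr (List.mem_map_of_mem ht)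
  exact IsConstruct.node X ts hX
    (CLHypergraph.subset_verts_reconRestrict_sdiff_unionComponents hXsub)
    (fun t ht => (hcomp _).mpr ⟨hmem t ht, hkept t ht⟩)
    (fun C hC => List.mem_map.mp (not_not.mp ((hcomp C).mp hC).2)) hsorted
    fun t ht => (hchild t ht).of_satExtension
      ((hmem t ht).satExtension_restrict_reconRestrict (hkept t ht))

end
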